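/- For α ∈ (0,1), λ < 0 and t ≥ 0, the function y(t) = E_α(λ t^α) satisfies 0 < y(t) ≤ 1, y is nonincreasing, and y(t) → 0 as t → ∞. -/

import Mathlib

open Set Filter

/-- The one-parameter Mittag–Leffler function `E_α(x) = Σ xⁿ / Γ(αn + 1)`. -/
noncomputable def mittagLeffler (α x : ℝ) : ℝ :=
  ∑' n : ℕ, x ^ n / Real.Gamma (α * n + 1)

/-!
Put `u t = E_α(λ t^α)` and `c = λ / Γ(α) < 0`. Integrating the series termwise (a Beta integral per
term) gives the Volterra equation `u t = 1 + c ∫₀ᵗ (t - s)^(α - 1) u s ds`.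

Such equations obey a comparison principle: if `w = F + c ∫₀ᵗ (t - s)^(α - 1) w s ds` with
`w 0 > 0`, `t^(1 - α) F t` nondecreasing and `w` analytic on `(0, ∞)`, then `w ≥ 0`. Otherwise
analyticity gives a first zero `t₀` with `w < 0` on some `(t₀, T]`; as
`T^(1 - α) (T - s)^(α - 1) ≤ t₀^(1 - α) (t₀ - s)^(α - 1)`, the equation at `T` weighted by
`T^(1 - α)` dominates the one at `t₀` weighted by `t₀^(1 - α)`, forcing `w T ≥ 0`.
With `F = 1` this gives `u ≥ 0`, and applied to `u - u (· + h)` it gives monotonicity. A zero of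
`u` would then persist on a half-line and, by analyticity, spread to `(0, ∞)`, contradicting
`u 0 = 1`. Finally, monotonicity inside the Volterra equation gives
`(1 - λ t^α / Γ(α + 1)) u t ≤ 1`, so `u t → 0`.
-/

open MeasureTheory intervalIntegral Real FormalMultilinearSeries
open scoped Topology

variable {α : ℝ}

theorem mul_Gamma_le_Gamma_add_mul_rpow (hα : 0 < α) (hα1 : α < 1) {z : ℝ} (hz : 0 < z) :
    z * Gamma z ≤ Gamma (z + α) * (z + α) ^ (1 - α) := by
  have hzα : 0 < z + α := by linarith
  have h := Gamma_mul_add_mul_le_rpow_Gamma_mul_rpow_Gamma hzα (by linarith : 0 < z + α + 1)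
    hα (sub_pos.2 hα1) (add_sub_cancel α 1)
  rw [show α * (z + α) + (1 - α) * (z + α + 1) = z + 1 by ring, Gamma_add_one hz.ne',
    Gamma_add_one hzα.ne', mul_rpow hzα.le (Gamma_pos_of_pos hzα).le, mul_left_comm,
    ← rpow_add (Gamma_pos_of_pos hzα), add_sub_cancel, rpow_one] at h
  linarith

theorem tendsto_Gamma_div_Gamma_add (hα : 0 < α) (hα1 : α < 1) :
    Tendsto (fun z => Gamma z / Gamma (z + α)) atTop (𝓝 0) := by
  have hlim : Tendsto (fun z => (1 + α / z) * (z + α) ^ (-α)) atTop (𝓝 0) := by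
    simpa using ((tendsto_const_nhds.div_atTop tendsto_id).const_add 1).mul
      ((tendsto_rpow_neg_atTop hα).comp (tendsto_atTop_add_const_right _ α tendsto_id))
  refine tendsto_of_tendsto_of_tendsto_of_le_of_le' tendsto_const_nhds hlim ?_ ?_
  · filter_upwards [eventually_gt_atTop 0] with z hz
    exact div_nonneg (Gamma_pos_of_pos hz).le (Gamma_pos_of_pos (by linarith)).le
  · filter_upwards [eventually_gt_atTop 0] with z hz
    have hzα : 0 < z + α := by linarith
    have hΓ := Gamma_pos_of_pos hzα
    rw [div_le_iff₀ hΓ]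
    calc Gamma z ≤ Gamma (z + α) * (z + α) ^ (1 - α) / z := by
          rw [le_div_iff₀ hz, mul_comm]; exact mul_Gamma_le_Gamma_add_mul_rpow hα hα1 hz
      _ = _ := by
          rw [sub_eq_add_neg, rpow_add hzα, rpow_one]; field_simp

theorem radius_ofScalars_inv_Gamma (hα : 0 < α) (hα1 : α < 1) {b : ℝ} (hb : 0 < b) :
    (ofScalars ℝ fun n : ℕ => (Gamma (α * n + b))⁻¹).radius = ⊤ := by
  refine ofScalars_radius_eq_top_of_tendsto _ _
    (Eventually.of_forall fun n => inv_ne_zero (Gamma_pos_of_pos (by positivity)).ne') ?_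
  have hz : Tendsto (fun n : ℕ => α * n + b) atTop atTop :=
    tendsto_atTop_add_const_right _ b (tendsto_natCast_atTop_atTop.const_mul_atTop hα)
  refine ((tendsto_Gamma_div_Gamma_add hα hα1).comp hz).congr fun n => ?_
  have h1 := Gamma_pos_of_pos (by positivity : 0 < α * n + b)
  have h2 := Gamma_pos_of_pos (by positivity : 0 < α * (n + 1 : ℕ) + b)
  rw [norm_inv, norm_inv, Real.norm_of_nonneg h1.le, Real.norm_of_nonneg h2.le, inv_div_inv,
    Function.comp_apply]
  push_cast
  ring_nf

theorem summable_pow_div_Gamma (hα : 0 < α) (hα1 : α < 1) {b : ℝ} (hb : 0 < b) (x : ℝ) :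
    Summable fun n : ℕ => x ^ n / Gamma (α * n + b) := by
  refine Summable.of_norm ?_
  simpa [ofScalars_apply_eq, div_eq_mul_inv, mul_comm] using
    (ofScalars ℝ fun n : ℕ => (Gamma (α * n + b))⁻¹).summable_norm_apply
      (x := x) (by simp [radius_ofScalars_inv_Gamma hα hα1 hb])

theorem analyticAt_mittagLeffler (hα : 0 < α) (hα1 : α < 1) (x : ℝ) :
    AnalyticAt ℝ (mittagLeffler α) x := by
  set p := ofScalars ℝ fun n : ℕ => (Gamma (α * n + 1))⁻¹
  have hp : p.radius = ⊤ := radius_ofScalars_inv_Gamma hα hα1 one_pos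
  have hsum : p.sum = mittagLeffler α := by
    ext y
    simp [p, mittagLeffler, FormalMultilinearSeries.sum, div_eq_mul_inv]
  rw [← hsum]
  exact (p.hasFPowerSeriesOnBall (by simp [hp])).analyticAt_of_mem (by simp [hp])

theorem mittagLeffler_zero (α : ℝ) : mittagLeffler α 0 = 1 := by
  rw [mittagLeffler, tsum_eq_single 0 fun n hn => by rw [zero_pow hn, zero_div]]
  simp

theorem analyticAt_rpow_const_of_pos {x : ℝ} (hx : 0 < x) (a : ℝ) :
    AnalyticAt ℝ (fun t : ℝ => t ^ a) x := by
  refine (analyticAt_rexp.comp ((analyticAt_log hx).mul (analyticAt_const (v := a)))).congr ?_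
  filter_upwards [eventually_gt_nhds hx] with t ht
  simp [rpow_def_of_pos ht]

theorem integral_sub_rpow_mul_rpow (hα : 0 < α) {β : ℝ} (hβ : -1 < β) {t : ℝ} (ht : 0 < t) :
    ∫ s in (0 : ℝ)..t, (t - s) ^ (α - 1) * s ^ β
      = Gamma α * Gamma (β + 1) / Gamma (α + β + 1) * t ^ (α + β) := by
  have hc := Complex.betaIntegral_scaled (β + 1) α ht
  rw [Complex.betaIntegral_eq_Gamma_mul_div _ _ (by simpa using (by linarith : 0 < β + 1))
    (by simpa using hα)] at hc
  apply Complex.ofReal_injective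
  calc ((∫ s in (0 : ℝ)..t, (t - s) ^ (α - 1) * s ^ β : ℝ) : ℂ)
      = ∫ s in (0 : ℝ)..t, (s : ℂ) ^ ((β : ℂ) + 1 - 1) * ((t : ℂ) - s) ^ ((α : ℂ) - 1) := by
        rw [← intervalIntegral.integral_ofReal]
        refine intervalIntegral.integral_congr fun s hs => ?_
        rw [uIcc_of_le ht.le] at hs
        simp only [Complex.ofReal_mul, add_sub_cancel_right]
        rw [Complex.ofReal_cpow (by linarith [hs.2]), Complex.ofReal_cpow hs.1]
        push_cast
        ring
    _ = _ := by
        rw [hc, ← Complex.ofReal_one, ← Complex.ofReal_add, ← Complex.ofReal_add,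
          ← Complex.ofReal_sub, ← Complex.ofReal_cpow ht.le, Complex.Gamma_ofReal,
          Complex.Gamma_ofReal, Complex.Gamma_ofReal, show β + 1 + α - 1 = α + β by ring,
          show β + 1 + α = α + β + 1 by ring]
        push_cast
        ring

theorem intervalIntegrable_kernel_mul (hα : 0 < α) (t : ℝ) {q : ℝ → ℝ} (hq : Continuous q)
    (a b : ℝ) : IntervalIntegrable (fun s => (t - s) ^ (α - 1) * q s) volume a b := by
  have h := (intervalIntegrable_rpow' (r := α - 1) (a := t - a) (b := t - b)
    (by linarith)).comp_sub_left t
  simp only [sub_sub_cancel] at h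
  exact h.mul_continuousOn hq.continuousOn

theorem integral_kernel_eq (hα : 0 < α) (t : ℝ) :
    ∫ s in (0 : ℝ)..t, (t - s) ^ (α - 1) = t ^ α / α := by
  simp [integral_comp_sub_left (fun s => s ^ (α - 1)),
    integral_rpow (Or.inl (by linarith : -1 < α - 1)), zero_rpow hα.ne']

theorem integral_kernel_mul_pos (hα : 0 < α) (hα1 : α ≤ 1) {q : ℝ → ℝ} (hq : Continuous q)
    {t : ℝ} (ht : 0 < t) (hq0 : ∀ s ∈ Icc 0 t, 0 ≤ q s) (hqpos : 0 < q 0) :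
    0 < ∫ s in (0 : ℝ)..t, (t - s) ^ (α - 1) * q s := by
  calc 0 < t ^ (α - 1) * ∫ s in (0 : ℝ)..t, q s :=
        mul_pos (rpow_pos_of_pos ht _) (integral_pos ht hq.continuousOn
          (fun s hs => hq0 s (Ioc_subset_Icc_self hs)) ⟨0, left_mem_Icc.2 ht.le, hqpos⟩)
    _ ≤ _ := by
        rw [← intervalIntegral.integral_const_mul]
        refine integral_mono_on_of_le_Ioo ht.le ((hq.intervalIntegrable 0 t).const_mul _)
          (intervalIntegrable_kernel_mul hα t hq 0 t) fun s hs => ?_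
        exact mul_le_mul_of_nonneg_right (rpow_le_rpow_of_nonpos (by linarith [hs.2])
          (by linarith [hs.1]) (by linarith)) (hq0 s (Ioo_subset_Icc_self hs))

theorem integral_kernel_mul_eq_add_shift (hα : 0 < α) {q : ℝ → ℝ} (hq : Continuous q) (t h : ℝ) :
    ∫ s in (0 : ℝ)..t + h, (t + h - s) ^ (α - 1) * q s
      = (∫ s in (0 : ℝ)..h, (t + h - s) ^ (α - 1) * q s)
        + ∫ s in (0 : ℝ)..t, (t - s) ^ (α - 1) * q (s + h) := by
  have hshift : ∫ s in (0 : ℝ)..t, (t - s) ^ (α - 1) * q (s + h)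
      = ∫ s in h..t + h, (t + h - s) ^ (α - 1) * q s := by
    simpa using integral_comp_add_right (fun s => (t + h - s) ^ (α - 1) * q s) h (a := 0) (b := t)
  rw [hshift, integral_add_adjacent_intervals (intervalIntegrable_kernel_mul hα _ hq 0 h)
    (intervalIntegrable_kernel_mul hα _ hq h (t + h))]

theorem rpow_one_sub_mul_rpow_sub_one_le (hα1 : α ≤ 1) {x y x' y' : ℝ} (hx : 0 ≤ x) (hy : 0 < y)
    (hy' : 0 < y') (h : x * y' ≤ x' * y) :
    x ^ (1 - α) * y ^ (α - 1) ≤ x' ^ (1 - α) * y' ^ (α - 1) := by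
  have hx' : 0 ≤ x' := nonneg_of_mul_nonneg_left ((mul_nonneg hx hy'.le).trans h) hy
  have hdiv : ∀ {a b : ℝ}, 0 ≤ a → 0 < b → a ^ (1 - α) * b ^ (α - 1) = (a / b) ^ (1 - α) :=
    fun ha hb => by rw [div_rpow ha hb.le, div_eq_mul_inv, ← rpow_neg hb.le, neg_sub]
  rw [hdiv hx hy, hdiv hx' hy']
  exact rpow_le_rpow (div_nonneg hx hy.le) ((div_le_div_iff₀ hy hy').2 h) (sub_nonneg.2 hα1)

theorem monotoneOn_rpow_mul_integral_kernel_add (hα : 0 < α) (hα1 : α ≤ 1) {q : ℝ → ℝ}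
    (hq : Continuous q) {h : ℝ} (hh : 0 ≤ h) (hq0 : ∀ s ∈ Icc 0 h, 0 ≤ q s) :
    MonotoneOn (fun t => t ^ (1 - α) * ∫ s in (0 : ℝ)..h, (t + h - s) ^ (α - 1) * q s) (Ioi 0) := by
  intro t ht t' ht' htt'
  simp only [← intervalIntegral.integral_const_mul]
  refine integral_mono_on hh ((intervalIntegrable_kernel_mul hα _ hq 0 h).const_mul _)
    ((intervalIntegrable_kernel_mul hα _ hq 0 h).const_mul _) fun s hs => ?_
  rw [← mul_assoc, ← mul_assoc]
  refine mul_le_mul_of_nonneg_right (rpow_one_sub_mul_rpow_sub_one_le hα1 (le_of_lt ht)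
    (by linarith [mem_Ioi.1 ht, hs.2]) (by linarith [mem_Ioi.1 ht', hs.2]) ?_) (hq0 s hs)
  nlinarith [mul_le_mul_of_nonneg_right htt' (sub_nonneg.2 hs.2)]

theorem integral_kernel_mul_mittagLeffler_term (hα : 0 < α) (lam : ℝ) (n : ℕ) {t : ℝ}
    (ht : 0 < t) :
    lam / Gamma α * ∫ s in (0 : ℝ)..t, (t - s) ^ (α - 1) * ((lam * s ^ α) ^ n / Gamma (α * n + 1))
      = (lam * t ^ α) ^ (n + 1) / Gamma (α * (n + 1 : ℕ) + 1) := by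
  have hpow : ∀ s : ℝ, 0 ≤ s → (lam * s ^ α) ^ n = lam ^ n * s ^ (α * n) := fun s hs => by
    rw [mul_pow, ← rpow_natCast (s ^ α), ← rpow_mul hs]
  have hΓα := (Gamma_pos_of_pos hα).ne'
  have hΓn := (Gamma_pos_of_pos (by positivity : 0 < α * n + 1)).ne'
  rw [intervalIntegral.integral_congr (g := fun s => lam ^ n / Gamma (α * n + 1) *
      ((t - s) ^ (α - 1) * s ^ (α * n))) fun s hs => by
        rw [uIcc_of_le ht.le] at hs; simp only [hpow s hs.1]; ring,
    intervalIntegral.integral_const_mul,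
    integral_sub_rpow_mul_rpow hα (by linarith [(by positivity : 0 ≤ α * n)]) ht,
    pow_succ, hpow t ht.le, rpow_add ht]
  push_cast
  rw [show α + α * n + 1 = α * (n + 1) + 1 by ring]
  field_simp

theorem mittagLeffler_eq_one_add_integral (hα : 0 < α) (hα1 : α < 1) (lam : ℝ) {t : ℝ}
    (ht : 0 < t) :
    mittagLeffler α (lam * t ^ α)
      = 1 + lam / Gamma α *
        ∫ s in (0 : ℝ)..t, (t - s) ^ (α - 1) * mittagLeffler α (lam * s ^ α) := by
  set term : ℕ → ℝ → ℝ := fun n s => (t - s) ^ (α - 1) * ((lam * s ^ α) ^ n / Gamma (α * n + 1))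
  set bound : ℕ → ℝ → ℝ :=
    fun n s => (t - s) ^ (α - 1) * ((|lam| * t ^ α) ^ n / Gamma (α * n + 1))
  have hΓ : ∀ n : ℕ, 0 < Gamma (α * n + 1) := fun n => Gamma_pos_of_pos (by positivity)
  have hcont : ∀ n : ℕ, Continuous fun s : ℝ => (lam * s ^ α) ^ n / Gamma (α * n + 1) := fun n =>
    ((continuous_const.mul (continuous_rpow_const hα.le)).pow n).div_const _
  have hE := summable_pow_div_Gamma hα hα1 one_pos
  have hsum : HasSum (fun n => ∫ s in (0 : ℝ)..t, term n s)
      (∫ s in (0 : ℝ)..t, (t - s) ^ (α - 1) * mittagLeffler α (lam * s ^ α)) := by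
    refine intervalIntegral.hasSum_integral_of_dominated_convergence bound
      (fun n => (intervalIntegrable_kernel_mul hα t (hcont n) 0 t).def'.aestronglyMeasurable)
      (fun n => ae_of_all _ fun s hs => ?_) (ae_of_all _ fun s _ => (hE _).mul_left _) ?_
      (ae_of_all _ fun s _ => (hE _).hasSum.mul_left _)
    · rw [uIoc_of_le ht.le] at hs
      have hk : 0 ≤ (t - s) ^ (α - 1) := rpow_nonneg (by linarith [hs.2]) _
      rw [norm_mul, norm_div, norm_pow, Real.norm_of_nonneg hk,
        Real.norm_of_nonneg (hΓ n).le, norm_mul, Real.norm_eq_abs, Real.norm_of_nonneg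
        (rpow_nonneg hs.1.le _)]
      simp only [bound]
      have := rpow_nonneg hs.1.le α
      gcongr
      exacts [hs.1.le, hs.2]
    · simp_rw [bound, tsum_mul_left]
      exact intervalIntegrable_kernel_mul hα t continuous_const 0 t
  have hshift : HasSum (fun n => lam / Gamma α * ∫ s in (0 : ℝ)..t, term n s)
      (mittagLeffler α (lam * t ^ α) - 1) := by
    have h := (hE (lam * t ^ α)).hasSum
    rw [← hasSum_nat_add_iff' 1] at h
    simpa [term, integral_kernel_mul_mittagLeffler_term hα lam _ ht, mittagLeffler] using h
  linarith [(hsum.mul_left (lam / Gamma α)).unique hshift]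

theorem exists_first_zero_of_neg {w : ℝ → ℝ} (hw : Continuous w) (hw0 : 0 < w 0) {t₁ : ℝ}
    (ht₁ : 0 ≤ t₁) (hwt₁ : w t₁ < 0) :
    ∃ t₀, 0 < t₀ ∧ w t₀ = 0 ∧ (∀ s ∈ Icc 0 t₀, 0 ≤ w s) ∧ ∃ᶠ s in 𝓝[>] t₀, w s < 0 := by
  set S := {t | 0 ≤ t ∧ w t < 0}
  have hS : S.Nonempty := ⟨t₁, ht₁, hwt₁⟩
  have hSb : BddBelow S := ⟨0, fun _ hs => hs.1⟩
  obtain ⟨δ, hδ, hball⟩ :=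
    Metric.eventually_nhds_iff.1 (hw.continuousAt.eventually (lt_mem_nhds hw0))
  have ht₀ : 0 < sInf S := hδ.trans_le <| le_csInf hS fun s hs => not_lt.1 fun hsδ =>
    (hball (by rwa [Real.dist_0_eq_abs, abs_of_nonneg hs.1])).not_gt hs.2
  have hnonneg : ∀ s ∈ Icc 0 (sInf S), 0 ≤ w s := by
    rw [← closure_Ico ht₀.ne]
    exact closure_minimal (fun s hs => not_lt.1 fun hws => notMem_of_lt_csInf hs.2 hSb ⟨hs.1, hws⟩)
      (isClosed_le continuous_const hw)
  have hle : w (sInf S) ≤ 0 :=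
    closure_minimal (fun _ hs => hs.2.le) (isClosed_le hw continuous_const)
      (csInf_mem_closure hS hSb)
  have hzero : w (sInf S) = 0 := le_antisymm hle (hnonneg _ ⟨ht₀.le, le_rfl⟩)
  refine ⟨sInf S, ht₀, hzero, hnonneg, (nhdsGT_basis _).frequently_iff.2 fun ε hε => ?_⟩
  obtain ⟨s, hs, hsε⟩ := exists_lt_of_csInf_lt hS hε
  refine ⟨s, ⟨(csInf_le hSb hs).lt_of_ne ?_, hsε⟩, hs.2⟩
  rintro rfl
  exact hs.2.ne hzero

theorem exists_neg_on_Ioc_of_analyticAt {w : ℝ → ℝ} {t₀ : ℝ} (hw : Continuous w)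
    (hwa : AnalyticAt ℝ w t₀) (hneg : ∃ᶠ s in 𝓝[>] t₀, w s < 0) :
    ∃ T, t₀ < T ∧ ∀ s ∈ Ioc t₀ T, w s < 0 := by
  rcases hwa.eventually_eq_zero_or_eventually_ne_zero with hzero | hne
  · obtain ⟨s, hsneg, hs0⟩ := (hneg.and_eventually (nhdsWithin_le_nhds hzero)).exists
    exact absurd hs0 hsneg.ne
  obtain ⟨b, hb, hball⟩ := (nhdsGT_basis t₀).mem_iff.1
    (nhdsWithin_mono _ (fun _ hs => ne_of_gt hs) hne)
  obtain ⟨T, hT, hwT⟩ := ((nhdsGT_basis t₀).frequently_iff.1 hneg) b hb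
  refine ⟨T, hT.1, fun s hs => not_le.1 fun hws => ?_⟩
  obtain ⟨z, hz, hwz⟩ := isPreconnected_Ioc.intermediate_value ⟨hT.1, le_rfl⟩ hs
    hw.continuousOn ⟨hwT.le, hws⟩
  exact hball (Ioc_subset_Ioo_right hT.2 hz) hwz

theorem nonneg_of_eq_add_mul_integral_kernel (hα : 0 < α) (hα1 : α ≤ 1) {c : ℝ} (hc : c ≤ 0)
    {w F : ℝ → ℝ} (hw : Continuous w) (hwa : ∀ t, 0 < t → AnalyticAt ℝ w t) (hw0 : 0 < w 0)
    (hF : MonotoneOn (fun t => t ^ (1 - α) * F t) (Ioi 0))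
    (heq : ∀ t, 0 < t → w t = F t + c * ∫ s in (0 : ℝ)..t, (t - s) ^ (α - 1) * w s)
    {t : ℝ} (ht : 0 ≤ t) : 0 ≤ w t := by
  by_contra! hwt
  obtain ⟨t₀, ht₀, hwt₀, hnonneg, hfreq⟩ := exists_first_zero_of_neg hw hw0 ht hwt
  obtain ⟨T, ht₀T, hneg⟩ := exists_neg_on_Ioc_of_analyticAt hw (hwa t₀ ht₀) hfreq
  have hT : 0 < T := ht₀.trans ht₀T
  have hint := fun x a b => intervalIntegrable_kernel_mul hα x hw a b
  set A₀ := ∫ s in (0 : ℝ)..t₀, (t₀ - s) ^ (α - 1) * w s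
  set A := ∫ s in (0 : ℝ)..t₀, (T - s) ^ (α - 1) * w s
  set B := ∫ s in t₀..T, (T - s) ^ (α - 1) * w s
  have hA : T ^ (1 - α) * A ≤ t₀ ^ (1 - α) * A₀ := by
    rw [← intervalIntegral.integral_const_mul, ← intervalIntegral.integral_const_mul]
    refine integral_mono_on_of_le_Ioo ht₀.le ((hint T 0 t₀).const_mul _)
      ((hint t₀ 0 t₀).const_mul _) fun s hs => ?_
    rw [← mul_assoc, ← mul_assoc]
    refine mul_le_mul_of_nonneg_right (rpow_one_sub_mul_rpow_sub_one_le hα1 hT.le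
      (by linarith [hs.2]) (by linarith [hs.2]) (by nlinarith [hs.1]))
      (hnonneg s (Ioo_subset_Icc_self hs))
  have hB : B ≤ 0 := by
    rw [← intervalIntegral.integral_zero]
    refine integral_mono_on_of_le_Ioo ht₀T.le (hint T t₀ T) intervalIntegrable_const fun s hs => ?_
    exact mul_nonpos_of_nonneg_of_nonpos (rpow_nonneg (by linarith [hs.2]) _)
      (hneg s (Ioo_subset_Ioc_self hs)).le
  have hAB : ∫ s in (0 : ℝ)..T, (T - s) ^ (α - 1) * w s = A + B :=
    (integral_add_adjacent_intervals (hint T 0 t₀) (hint T t₀ T)).symm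
  have eT : T ^ (1 - α) * w T = T ^ (1 - α) * F T + c * (T ^ (1 - α) * A)
      + c * T ^ (1 - α) * B := by
    rw [heq T hT, hAB]; ring
  have e₀ : 0 = t₀ ^ (1 - α) * F t₀ + c * (t₀ ^ (1 - α) * A₀) := by
    have h := heq t₀ ht₀
    rw [hwt₀] at h
    linear_combination t₀ ^ (1 - α) * h
  have hFt := hF ht₀ hT ht₀T.le
  have hcA := mul_le_mul_of_nonpos_left hA hc
  have hcB : 0 ≤ c * T ^ (1 - α) * B :=
    mul_nonneg_of_nonpos_of_nonpos (mul_nonpos_of_nonpos_of_nonneg hc (rpow_nonneg hT.le _)) hB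
  have hwT : T ^ (1 - α) * w T < 0 :=
    mul_neg_of_pos_of_neg (rpow_pos_of_pos hT _) (hneg T ⟨ht₀T, le_rfl⟩)
  simp only at hFt
  linarith

theorem sub_shift_eq_of_eq_one_add_integral_kernel (hα : 0 < α) {c : ℝ} {u : ℝ → ℝ}
    (hu : Continuous u)
    (heq : ∀ t, 0 < t → u t = 1 + c * ∫ s in (0 : ℝ)..t, (t - s) ^ (α - 1) * u s)
    {h t : ℝ} (hh : 0 ≤ h) (ht : 0 < t) :
    u t - u (t + h) = -c * (∫ s in (0 : ℝ)..h, (t + h - s) ^ (α - 1) * u s)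
      + c * ∫ s in (0 : ℝ)..t, (t - s) ^ (α - 1) * (u s - u (s + h)) := by
  have hsub : ∫ s in (0 : ℝ)..t, (t - s) ^ (α - 1) * (u s - u (s + h))
      = (∫ s in (0 : ℝ)..t, (t - s) ^ (α - 1) * u s)
        - ∫ s in (0 : ℝ)..t, (t - s) ^ (α - 1) * u (s + h) := by
    simp_rw [mul_sub]
    exact integral_sub (intervalIntegrable_kernel_mul hα t hu 0 t)
      (intervalIntegrable_kernel_mul hα t (hu.comp (continuous_add_const h)) 0 t)
  rw [hsub, heq t ht, heq (t + h) (by linarith), integral_kernel_mul_eq_add_shift hα hu]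
  ring

theorem continuous_mittagLeffler_mul_rpow (hα : 0 < α) (hα1 : α < 1) (lam : ℝ) :
    Continuous fun t : ℝ => mittagLeffler α (lam * t ^ α) :=
  continuous_iff_continuousAt.2 fun _ => (analyticAt_mittagLeffler hα hα1 _).continuousAt.comp
    (continuous_const.mul (continuous_rpow_const hα.le)).continuousAt

theorem analyticAt_mittagLeffler_mul_rpow (hα : 0 < α) (hα1 : α < 1) (lam : ℝ) {t : ℝ}
    (ht : 0 < t) : AnalyticAt ℝ (fun t : ℝ => mittagLeffler α (lam * t ^ α)) t :=
  (analyticAt_mittagLeffler hα hα1 _).comp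
    (analyticAt_const.mul (analyticAt_rpow_const_of_pos ht α))

theorem mittagLeffler_mul_zero_rpow (hα : 0 < α) (lam : ℝ) :
    mittagLeffler α (lam * 0 ^ α) = 1 := by
  rw [zero_rpow hα.ne', mul_zero, mittagLeffler_zero]

variable {lam : ℝ}

theorem mittagLeffler_mul_rpow_nonneg (hα : 0 < α) (hα1 : α < 1) (hlam : lam ≤ 0) {t : ℝ}
    (ht : 0 ≤ t) : 0 ≤ mittagLeffler α (lam * t ^ α) :=
  nonneg_of_eq_add_mul_integral_kernel hα hα1.le
    (div_nonpos_of_nonpos_of_nonneg hlam (Gamma_pos_of_pos hα).le)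
    (continuous_mittagLeffler_mul_rpow hα hα1 lam)
    (fun _ => analyticAt_mittagLeffler_mul_rpow hα hα1 lam)
    (by rw [mittagLeffler_mul_zero_rpow hα]; exact one_pos) (F := fun _ => 1)
    (by simpa using
      (monotoneOn_rpow_Ici_of_exponent_nonneg (sub_nonneg.2 hα1.le)).mono Ioi_subset_Ici_self)
    (fun _ => mittagLeffler_eq_one_add_integral hα hα1 lam) ht

theorem mittagLeffler_mul_rpow_lt_one (hα : 0 < α) (hα1 : α < 1) (hlam : lam < 0) {t : ℝ}
    (ht : 0 < t) : mittagLeffler α (lam * t ^ α) < 1 := by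
  have hI := integral_kernel_mul_pos hα hα1.le (continuous_mittagLeffler_mul_rpow hα hα1 lam) ht
    (fun s hs => mittagLeffler_mul_rpow_nonneg hα hα1 hlam.le hs.1)
    (by rw [mittagLeffler_mul_zero_rpow hα]; exact one_pos)
  rw [mittagLeffler_eq_one_add_integral hα hα1 lam ht]
  linarith [mul_neg_of_neg_of_pos (div_neg_of_neg_of_pos hlam (Gamma_pos_of_pos hα)) hI]

theorem mittagLeffler_mul_rpow_antitoneOn (hα : 0 < α) (hα1 : α < 1) (hlam : lam < 0) :
    AntitoneOn (fun t : ℝ => mittagLeffler α (lam * t ^ α)) (Ici 0) := by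
  intro a ha b _ hab
  rcases hab.eq_or_lt with rfl | hab
  · rfl
  set u := fun t : ℝ => mittagLeffler α (lam * t ^ α)
  set c := lam / Gamma α
  set h := b - a
  have hh : 0 < h := sub_pos.2 hab
  have hc : c < 0 := div_neg_of_neg_of_pos hlam (Gamma_pos_of_pos hα)
  have hu : Continuous u := continuous_mittagLeffler_mul_rpow hα hα1 lam
  have hvolterra : ∀ t, 0 < t → u t = 1 + c * ∫ s in (0 : ℝ)..t, (t - s) ^ (α - 1) * u s :=
    fun _ => mittagLeffler_eq_one_add_integral hα hα1 lam
  have hanalytic : ∀ t, 0 < t → AnalyticAt ℝ (fun t => u t - u (t + h)) t := fun t ht =>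
    (analyticAt_mittagLeffler_mul_rpow hα hα1 lam ht).sub
      ((analyticAt_mittagLeffler_mul_rpow hα hα1 lam (by linarith)).comp
        (analyticAt_id.add analyticAt_const))
  have hpos0 : 0 < u 0 - u (0 + h) := by
    simp only [zero_add, u, mittagLeffler_mul_zero_rpow hα]
    linarith [mittagLeffler_mul_rpow_lt_one hα hα1 hlam hh]
  have hforcing : MonotoneOn (fun t => t ^ (1 - α) *
      (-c * ∫ s in (0 : ℝ)..h, (t + h - s) ^ (α - 1) * u s)) (Ioi 0) := fun t ht t' ht' htt' => by
    have := monotoneOn_rpow_mul_integral_kernel_add hα hα1.le hu hh.le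
      (fun s hs => mittagLeffler_mul_rpow_nonneg hα hα1 hlam.le hs.1) ht ht' htt'
    simp only [mul_left_comm _ (-c)] at this ⊢
    exact mul_le_mul_of_nonneg_left this (neg_nonneg.2 hc.le)
  simpa [h] using nonneg_of_eq_add_mul_integral_kernel hα hα1.le hc.le
    (hu.sub (hu.comp (continuous_add_const h))) hanalytic hpos0 hforcing
    (fun t ht => sub_shift_eq_of_eq_one_add_integral_kernel hα hu hvolterra hh.le ht) ha

theorem mittagLeffler_mul_rpow_pos (hα : 0 < α) (hα1 : α < 1) (hlam : lam < 0) {t : ℝ}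
    (ht : 0 ≤ t) : 0 < mittagLeffler α (lam * t ^ α) := by
  set u := fun t : ℝ => mittagLeffler α (lam * t ^ α)
  refine (mittagLeffler_mul_rpow_nonneg hα hα1 hlam.le ht).lt_of_ne fun hzero => ?_
  have hvanish : ∀ s, t ≤ s → u s = 0 := fun s hs => le_antisymm
    (hzero ▸ mittagLeffler_mul_rpow_antitoneOn hα hα1 hlam ht (ht.trans hs) hs)
    (mittagLeffler_mul_rpow_nonneg hα hα1 hlam.le (ht.trans hs))
  have hu : AnalyticOnNhd ℝ u (Ioi 0) := fun s hs =>
    analyticAt_mittagLeffler_mul_rpow hα hα1 lam hs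
  have heq : EqOn u 0 (Ioi 0) :=
    hu.eqOn_zero_of_preconnected_of_eventuallyEq_zero isPreconnected_Ioi
      (show t + 1 ∈ Ioi 0 by simp only [mem_Ioi]; linarith)
      ((eventually_gt_nhds (by linarith : t < t + 1)).mono fun s hs => hvanish s hs.le)
  have h0 : u 0 = 0 := closure_minimal heq
    (isClosed_eq (continuous_mittagLeffler_mul_rpow hα hα1 lam) continuous_const)
    (by rw [closure_Ioi]; exact self_mem_Ici)
  simp [u, mittagLeffler_mul_zero_rpow hα] at h0

theorem one_sub_mul_rpow_mul_mittagLeffler_le_one (hα : 0 < α) (hα1 : α < 1) (hlam : lam < 0)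
    {t : ℝ} (ht : 0 < t) :
    (1 - lam / Gamma (α + 1) * t ^ α) * mittagLeffler α (lam * t ^ α) ≤ 1 := by
  set u := fun t : ℝ => mittagLeffler α (lam * t ^ α)
  have hI : u t * (t ^ α / α) ≤ ∫ s in (0 : ℝ)..t, (t - s) ^ (α - 1) * u s := by
    rw [← integral_kernel_eq hα, ← intervalIntegral.integral_const_mul]
    refine integral_mono_on ht.le ?_ (intervalIntegrable_kernel_mul hα t
      (continuous_mittagLeffler_mul_rpow hα hα1 lam) 0 t) fun s hs => ?_
    · simpa [mul_comm] using intervalIntegrable_kernel_mul hα t (continuous_const (y := u t)) 0 t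
    rw [mul_comm]
    exact mul_le_mul_of_nonneg_left
      (mittagLeffler_mul_rpow_antitoneOn hα hα1 hlam hs.1 ht.le hs.2)
      (rpow_nonneg (by linarith [hs.2]) _)
  have hΓ := Gamma_pos_of_pos hα
  have hc : lam / Gamma α ≤ 0 := div_nonpos_of_nonpos_of_nonneg hlam.le hΓ.le
  have hvolterra := mittagLeffler_eq_one_add_integral hα hα1 lam ht
  rw [Gamma_add_one hα.ne']
  have : lam / (α * Gamma α) * t ^ α * u t = lam / Gamma α * (u t * (t ^ α / α)) := by
    field_simp
  nlinarith [mul_le_mul_of_nonpos_left hI hc]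

theorem tendsto_mittagLeffler_mul_rpow_atTop (hα : 0 < α) (hα1 : α < 1) (hlam : lam < 0) :
    Tendsto (fun t : ℝ => mittagLeffler α (lam * t ^ α)) atTop (𝓝 0) := by
  have hk : 0 < -lam / Gamma (α + 1) := div_pos (neg_pos.2 hlam) (Gamma_pos_of_pos (by linarith))
  have hlim : Tendsto (fun t : ℝ => (1 - lam / Gamma (α + 1) * t ^ α)⁻¹) atTop (𝓝 0) := by
    refine tendsto_inv_atTop_zero.comp (tendsto_atTop_add_const_left _ 1
      ((tendsto_rpow_atTop hα).const_mul_atTop hk) |>.congr fun t => ?_)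
    ring
  refine tendsto_of_tendsto_of_tendsto_of_le_of_le' tendsto_const_nhds hlim
    (eventually_ge_atTop 0 |>.mono fun t ht => mittagLeffler_mul_rpow_nonneg hα hα1 hlam.le ht)
    (eventually_gt_atTop 0 |>.mono fun t ht => ?_)
  have hpos : 0 < 1 - lam / Gamma (α + 1) * t ^ α := by
    have := mul_pos hk (rpow_pos_of_pos ht α)
    rw [neg_div] at this
    linarith
  rw [← one_div, le_div_iff₀' hpos]
  exact one_sub_mul_rpow_mul_mittagLeffler_le_one hα hα1 hlam ht

/-- for `α ∈ (0,1)` and `λ < 0`, the function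
`y(t) = E_α(λ t^α)` satisfies `0 < y(t) ≤ 1`, is nonincreasing on `[0,∞)`,
and tends to `0` as `t → ∞`. -/
theorem mittagLeffler_pos_antitone_tendsto_zero (α lam : ℝ)
    (hα : 0 < α) (hα1 : α < 1) (hlam : lam < 0) :
    (∀ t : ℝ, 0 ≤ t →
      0 < mittagLeffler α (lam * t ^ α) ∧ mittagLeffler α (lam * t ^ α) ≤ 1) ∧
    AntitoneOn (fun t : ℝ => mittagLeffler α (lam * t ^ α)) (Ici (0:ℝ)) ∧
    Tendsto (fun t : ℝ => mittagLeffler α (lam * t ^ α)) atTop (nhds 0) := by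
  have hanti := mittagLeffler_mul_rpow_antitoneOn hα hα1 hlam
  refine ⟨fun t ht => ⟨mittagLeffler_mul_rpow_pos hα hα1 hlam ht, ?_⟩, hanti,
    tendsto_mittagLeffler_mul_rpow_atTop hα hα1 hlam⟩
  simpa [mittagLeffler_mul_zero_rpow hα] using hanti self_mem_Ici ht ht
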